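/- For every v ∈ H¹(𝕋), ∫_𝕋 arctan(∂ₓv) · ∂ₓv dx ≥ ‖∂ₓv‖_{L¹(𝕋)} · arctan(‖∂ₓv‖_{L¹(𝕋)}). -/

import Mathlib

open MeasureTheory intervalIntegral

/-- `u' : ℝ → ℝ` is the weak derivative of the 1-periodic function `u` on the
torus `𝕋 = ℝ/ℤ`: for every smooth 1-periodic test function `φ`,
`∫₀¹ u φ' = - ∫₀¹ u' φ`. -/
def WeakDerivT (u u' : ℝ → ℝ) : Prop :=
  ∀ φ : ℝ → ℝ, ContDiff ℝ (⊤ : ℕ∞) φ → Function.Periodic φ 1 →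
    ∫ x in (0:ℝ)..1, u x * deriv φ x = - ∫ x in (0:ℝ)..1, u' x * φ x

lemma gconv : ConvexOn ℝ Set.univ (fun x : ℝ => x * Real.arctan x) := by
  have hgd : ∀ x : ℝ, HasDerivAt (fun x : ℝ => x * Real.arctan x)
      (Real.arctan x + x * (1 / (1 + x ^ 2))) x := by
    intro x
    have h := (hasDerivAt_id' x).mul (Real.hasDerivAt_arctan x)
    rw [show (1:ℝ) * Real.arctan x + x * (1 / (1 + x ^ 2)) = Real.arctan x + x * (1 / (1 + x ^ 2)) by ring] at h
    exact h
  have hderiv : deriv (fun x : ℝ => x * Real.arctan x)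
      = fun x => Real.arctan x + x * (1 / (1 + x ^ 2)) :=
    funext fun x => (hgd x).deriv
  have hgd2 : ∀ x : ℝ, HasDerivAt (fun x : ℝ => Real.arctan x + x * (1 / (1 + x ^ 2)))
      (2 / (1 + x ^ 2) ^ 2) x := by
    intro x
    have h0 : (1 : ℝ) + x ^ 2 ≠ 0 := by positivity
    have h1 : HasDerivAt (fun x : ℝ => x / (1 + x ^ 2))
        ((1 * (1 + x ^ 2) - x * (2 * x)) / (1 + x ^ 2) ^ 2) x := by
      exact (hasDerivAt_id x).div (by simpa using ((hasDerivAt_pow 2 x).const_add 1)) h0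
    have h2 := (Real.hasDerivAt_arctan x).add h1
    have heq : 1 / (1 + x ^ 2) + (1 * (1 + x ^ 2) - x * (2 * x)) / (1 + x ^ 2) ^ 2
        = 2 / (1 + x ^ 2) ^ 2 := by field_simp; ring
    have : (fun x : ℝ => Real.arctan x + x / (1 + x ^ 2))
        = fun x : ℝ => Real.arctan x + x * (1 / (1 + x ^ 2)) := by
      funext y; rw [mul_one_div]
    rw [heq] at h2; rw [← this]; exact h2
  apply convexOn_of_deriv2_nonneg' convex_univ
  · exact fun x _ => (hgd x).differentiableAt.differentiableWithinAt
  · rw [hderiv]; exact fun x _ => (hgd2 x).differentiableAt.differentiableWithinAt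
  · intro x _
    have : deriv^[2] (fun x : ℝ => x * Real.arctan x) x
        = deriv (deriv (fun x : ℝ => x * Real.arctan x)) x := rfl
    rw [this, hderiv, (hgd2 x).deriv]
    positivity

theorem stmt_16 (v v' : ℝ → ℝ)
    (hv : Function.Periodic v 1) (hw : WeakDerivT v v')
    (hL1 : IntegrableOn (fun x => |v' x|) (Set.Ioc (0:ℝ) 1))
    (hint : IntegrableOn (fun x => Real.arctan (v' x) * v' x) (Set.Ioc (0:ℝ) 1)) :
    (∫ x in (0:ℝ)..1, Real.arctan (v' x) * v' x) ≥
      (∫ x in (0:ℝ)..1, |v' x|) *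
        Real.arctan (∫ x in (0:ℝ)..1, |v' x|) := by
  have hkey : ∀ x, Real.arctan (v' x) * v' x = |v' x| * Real.arctan |v' x| := by
    intro x
    rcases le_or_gt 0 (v' x) with h | h
    · rw [abs_of_nonneg h]; ring
    · rw [abs_of_neg h, Real.arctan_neg]; ring
  have hprob : IsProbabilityMeasure (volume.restrict (Set.Ioc (0:ℝ) 1)) :=
    ⟨by simp [Real.volume_Ioc]⟩
  have hgi : Integrable ((fun x : ℝ => x * Real.arctan x) ∘ (fun x => |v' x|))
      (volume.restrict (Set.Ioc (0:ℝ) 1)) := by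
    have : ((fun x : ℝ => x * Real.arctan x) ∘ (fun x => |v' x|))
        = fun x => Real.arctan (v' x) * v' x := by
      funext x; simp [Function.comp, hkey x]
    rw [this]; exact hint
  have hjensen := gconv.map_integral_le
    (μ := volume.restrict (Set.Ioc (0:ℝ) 1)) (f := fun x => |v' x|)
    ((continuous_id.mul Real.continuous_arctan).continuousOn)
    isClosed_univ (Filter.Eventually.of_forall fun _ => Set.mem_univ _) hL1 hgi
  rw [intervalIntegral.integral_of_le zero_le_one, intervalIntegral.integral_of_le zero_le_one]
  calc (∫ x in Set.Ioc (0:ℝ) 1, |v' x|) * Real.arctan (∫ x in Set.Ioc (0:ℝ) 1, |v' x|)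
      ≤ ∫ x in Set.Ioc (0:ℝ) 1, |v' x| * Real.arctan |v' x| := hjensen
    _ = ∫ x in Set.Ioc (0:ℝ) 1, Real.arctan (v' x) * v' x := by
        refine integral_congr_ae (Filter.Eventually.of_forall fun x => ?_)
        exact (hkey x).symm
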